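/- Let (Ω, F, P) be a probability space, let q ≥ 1 be fixed, and let (p_n) be a sequence of integers with p_n ≥ q + 2 and p_n ≤ C₀·n^α for some constant C₀ and some 0 ≤ α < 1. For each n let M^{(n)} be a real symmetric positive semidefinite p_n×p_n matrix whose nonzero eigenvalues are exactly λ_1 ≥ λ_2 ≥ ... ≥ λ_q > 0 (the same for all n), and let M_n : Ω → (real symmetric p_n×p_n matrices) be measurable with ‖M_n − M^{(n)}‖_F = O_p((p_n/n)^{1/2}), i.e. for every ε > 0 there is C > 0 with P(‖M_n − M^{(n)}‖_F > C·(p_n/n)^{1/2}) ≤ ε for all n. Let λ̂_j(n) = λ_j(M_n), let c₁(n), c₂(n) > 0 with c₁(n) → 0, c₂(n) → 0 and n·c₁(n)·c₂(n)/p_n → ∞, and fix τ ∈ (0, 1). Define ŝ_j(n) = λ̂_j(n)/(1 + λ̂_j(n)), ŝ*_j(n) = (ŝ_j(n)² + c₁(n))/(ŝ_{j+1}(n)² + c₁(n)) − 1, r_j(n) = (ŝ*_{j+1}(n) + c₂(n))/(ŝ*_j(n) + c₂(n)), and S_n = {j ∈ {1, ..., p_n − 2} : r_j(n) ≤ τ}.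 Then P(S_n is nonempty and max S_n = q) → 1 as n → ∞. -/

import Mathlib

/-
On the event `‖M_n - M‖_F ≤ δ_n := C (p_n / n)^{1/2}`, Weyl's inequality (the Frobenius norm
dominates the operator norm) puts every `λ̂_j` within `δ_n` of the corresponding eigenvalue of `M`.
Hence `ŝ_q` stays bounded away from zero while `ŝ_j² ≤ 4 δ_n²` for `j > q`, so that `ŝ*_q ≥ 1` and
`|ŝ*_j| ≤ ε_n := 4 δ_n² / c₁` for `j > q`. As `n c₁ c₂ / p_n → ∞`, eventually `ε_n ≪ c₂`: then
`r_q ≤ 2 c₂ ≤ τ`, whereas `r_j ≥ (c₂ - ε_n) / (c₂ + ε_n) > τ` for every `j > q`.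
-/

open Filter MeasureTheory
open scoped Classical ENNReal

/-- The `i`-th largest eigenvalue (1-based, counted with multiplicity) of a real
symmetric `k × k` matrix; junk value `0` if `A` is not symmetric or `i` is out of range. -/
noncomputable def eigDesc {k : ℕ} (A : Matrix (Fin k) (Fin k) ℝ) (i : ℕ) : ℝ :=
  if h : A.IsHermitian ∧ i - 1 < k then
    h.1.eigenvalues (Tuple.sort h.1.eigenvalues (Fin.rev ⟨i - 1, h.2⟩))
  else 0

/-- The Frobenius norm of a real matrix. -/
noncomputable def frobNorm {m n : ℕ} (C : Matrix (Fin m) (Fin n) ℝ) : ℝ :=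
  Real.sqrt (∑ i, ∑ j, (C i j) ^ 2)

/-- `ŝ_j = λ̂_j / (1 + λ̂_j)`. -/
noncomputable def sHat (lam : ℕ → ℝ) (j : ℕ) : ℝ := lam j / (1 + lam j)

/-- First-round ridge ratio `ŝ*_j = (ŝ_j² + c₁)/(ŝ_{j+1}² + c₁) − 1`. -/
noncomputable def sStar (lam : ℕ → ℝ) (c1 : ℝ) (j : ℕ) : ℝ :=
  ((sHat lam j) ^ 2 + c1) / ((sHat lam (j + 1)) ^ 2 + c1) - 1

/-- Second-round ridge ratio `r_j = (ŝ*_{j+1} + c₂)/(ŝ*_j + c₂)`. -/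
noncomputable def rRatio (lam : ℕ → ℝ) (c1 c2 : ℝ) (j : ℕ) : ℝ :=
  (sStar lam c1 (j + 1) + c2) / (sStar lam c1 j + c2)

open scoped InnerProductSpace Topology
open Module Submodule Matrix

lemma Submodule.exists_mem_inf_ne_zero_of_finrank_lt {K V : Type*} [DivisionRing K]
    [AddCommGroup V] [Module K V] [FiniteDimensional K V] (W₁ W₂ : Submodule K V)
    (h : finrank K V < finrank K W₁ + finrank K W₂) : ∃ x ∈ W₁, x ∈ W₂ ∧ x ≠ 0 := by
  have hinf : W₁ ⊓ W₂ ≠ ⊥ := by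
    rw [Ne, ← Submodule.finrank_eq_zero]
    have := W₁.finrank_sup_add_finrank_inf_eq W₂
    have := (W₁ ⊔ W₂).finrank_le
    omega
  obtain ⟨x, hx, hx0⟩ := Submodule.exists_mem_ne_zero_of_ne_bot hinf
  exact ⟨x, hx.1, hx.2, hx0⟩

namespace OrthonormalBasis
variable {𝕜 E ι : Type*} [RCLike 𝕜] [NormedAddCommGroup E] [InnerProductSpace 𝕜 E] [Fintype ι]
  (b : OrthonormalBasis ι 𝕜 E)

lemma finrank_span_image (s : Finset ι) : finrank 𝕜 (span 𝕜 (b '' s)) = s.card := by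
  rw [Set.image_eq_range]
  exact (finrank_span_eq_card (b.orthonormal.linearIndependent.comp _ Subtype.val_injective)).trans
    (by simp)

lemma repr_eq_zero_of_mem_span_image {s : Set ι} {x : E} (hx : x ∈ span 𝕜 (b '' s)) {i : ι}
    (hi : i ∉ s) : b.repr x i = 0 := by
  obtain ⟨l, hl, rfl⟩ := (Finsupp.mem_span_image_iff_linearCombination 𝕜).mp hx
  rw [b.repr_apply_apply, inner_eq_zero_symm]
  exact b.orthonormal.inner_finsupp_eq_zero hi hl

end OrthonormalBasis

lemma OrthonormalBasis.norm_sq_eq_sum_repr_sq {E ι : Type*} [NormedAddCommGroup E]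
    [InnerProductSpace ℝ E] [Fintype ι] (b : OrthonormalBasis ι ℝ E) (x : E) :
    ‖x‖ ^ 2 = ∑ i, b.repr x i ^ 2 := by
  rw [← b.repr.norm_map, EuclideanSpace.norm_sq_eq]
  simp only [Real.norm_eq_abs, sq_abs]

namespace LinearMap.IsSymmetric
variable {E : Type*} [NormedAddCommGroup E] [InnerProductSpace ℝ E] [FiniteDimensional ℝ E]
  {n : ℕ} (hn : finrank ℝ E = n) {T S : E →ₗ[ℝ] E}

lemma inner_apply_self_eq_sum (hT : T.IsSymmetric) (x : E) :
    ⟪T x, x⟫_ℝ = ∑ i, hT.eigenvalues hn i * (hT.eigenvectorBasis hn).repr x i ^ 2 := by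
  rw [← (hT.eigenvectorBasis hn).repr.inner_map_map, PiLp.inner_apply]
  simp [hT.eigenvectorBasis_apply_self_apply, sq, mul_left_comm]

lemma le_inner_apply_self_of_mem_span (hT : T.IsSymmetric) {s : Set (Fin n)} {g : ℝ}
    (hg : ∀ i ∈ s, g ≤ hT.eigenvalues hn i) {x : E}
    (hx : x ∈ span ℝ (hT.eigenvectorBasis hn '' s)) : g * ‖x‖ ^ 2 ≤ ⟪T x, x⟫_ℝ := by
  rw [hT.inner_apply_self_eq_sum hn, (hT.eigenvectorBasis hn).norm_sq_eq_sum_repr_sq,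
    Finset.mul_sum]
  refine Finset.sum_le_sum fun i _ => ?_
  by_cases hi : i ∈ s
  · exact mul_le_mul_of_nonneg_right (hg i hi) (sq_nonneg _)
  · simp [(hT.eigenvectorBasis hn).repr_eq_zero_of_mem_span_image hx hi]

lemma inner_apply_self_le_of_mem_span (hT : T.IsSymmetric) {s : Set (Fin n)} {g : ℝ}
    (hg : ∀ i ∈ s, hT.eigenvalues hn i ≤ g) {x : E}
    (hx : x ∈ span ℝ (hT.eigenvectorBasis hn '' s)) : ⟪T x, x⟫_ℝ ≤ g * ‖x‖ ^ 2 := by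
  rw [hT.inner_apply_self_eq_sum hn, (hT.eigenvectorBasis hn).norm_sq_eq_sum_repr_sq,
    Finset.mul_sum]
  refine Finset.sum_le_sum fun i _ => ?_
  by_cases hi : i ∈ s
  · exact mul_le_mul_of_nonneg_right (hg i hi) (sq_nonneg _)
  · simp [(hT.eigenvectorBasis hn).repr_eq_zero_of_mem_span_image hx hi]

theorem eigenvalues_le_add_of_inner_sub_le (hT : T.IsSymmetric) (hS : S.IsSymmetric) {c : ℝ}
    (hc : ∀ x, ⟪(T - S) x, x⟫_ℝ ≤ c * ‖x‖ ^ 2) (i : Fin n) :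
    hT.eigenvalues hn i ≤ hS.eigenvalues hn i + c := by
  -- Courant–Fischer: the first `i + 1` eigenvectors of `T` and the last `n - i` eigenvectors of
  -- `S` span subspaces that meet nontrivially.
  obtain ⟨x, hxT, hxS, hx0⟩ := Submodule.exists_mem_inf_ne_zero_of_finrank_lt
    (span ℝ (hT.eigenvectorBasis hn '' ↑(Finset.Iic i)))
    (span ℝ (hS.eigenvectorBasis hn '' ↑(Finset.Ici i))) (by
      rw [OrthonormalBasis.finrank_span_image, OrthonormalBasis.finrank_span_image, Fin.card_Iic,
        Fin.card_Ici, hn]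
      omega)
  have hTx := hT.le_inner_apply_self_of_mem_span hn
    (fun j hj => hT.eigenvalues_antitone hn (Finset.mem_Iic.mp hj)) hxT
  have hSx := hS.inner_apply_self_le_of_mem_span hn
    (fun j hj => hS.eigenvalues_antitone hn (Finset.mem_Ici.mp hj)) hxS
  have hcx := hc x
  rw [LinearMap.sub_apply, inner_sub_left] at hcx
  have hx : 0 < ‖x‖ ^ 2 := by positivity
  nlinarith

end LinearMap.IsSymmetric

section
attribute [local instance] Matrix.frobeniusNormedAddCommGroup

lemma frobNorm_eq_norm {m n : ℕ} (C : Matrix (Fin m) (Fin n) ℝ) : frobNorm C = ‖C‖ := by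
  rw [frobNorm, frobenius_norm_def, Real.sqrt_eq_rpow]
  simp

lemma frobNorm_sub_comm {m n : ℕ} (A B : Matrix (Fin m) (Fin n) ℝ) :
    frobNorm (A - B) = frobNorm (B - A) := by
  rw [frobNorm_eq_norm, frobNorm_eq_norm, norm_sub_rev]

lemma norm_toEuclideanLin_apply_le_frobNorm {m n : ℕ} (C : Matrix (Fin m) (Fin n) ℝ)
    (x : EuclideanSpace ℝ (Fin n)) : ‖toEuclideanLin C x‖ ≤ frobNorm C * ‖x‖ := by
  rw [frobNorm_eq_norm, toLpLin_apply, ← frobenius_norm_replicateCol (ι := Unit),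
    ← frobenius_norm_replicateCol (ι := Unit), replicateCol_mulVec]
  exact frobenius_norm_mul _ _
end

lemma inner_toEuclideanLin_apply_self_le {k : ℕ} (C : Matrix (Fin k) (Fin k) ℝ)
    (x : EuclideanSpace ℝ (Fin k)) : ⟪toEuclideanLin C x, x⟫_ℝ ≤ frobNorm C * ‖x‖ ^ 2 :=
  calc ⟪toEuclideanLin C x, x⟫_ℝ ≤ ‖toEuclideanLin C x‖ * ‖x‖ := real_inner_le_norm _ _
    _ ≤ frobNorm C * ‖x‖ * ‖x‖ := by
        gcongr; exact norm_toEuclideanLin_apply_le_frobNorm C x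
    _ = frobNorm C * ‖x‖ ^ 2 := by ring

section
variable {k : ℕ} {A B : Matrix (Fin k) (Fin k) ℝ}

lemma eigDesc_eq_eigenvalues₀ (hA : A.IsHermitian) {i : ℕ} (hi : i - 1 < k) :
    eigDesc A i = hA.eigenvalues₀ (Fin.cast (Fintype.card_fin k).symm ⟨i - 1, hi⟩) := by
  -- `hA.eigenvalues ∘ σ` is the antitone `hA.eigenvalues₀` read backwards, hence the increasing
  -- rearrangement of `hA.eigenvalues` that `Tuple.sort` produces.
  let σ : Equiv.Perm (Fin k) := (Fin.revPerm.trans (finCongr (Fintype.card_fin k).symm)).trans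
    (Fintype.equivOfCardEq (Fintype.card_fin _))
  have hsorted : hA.eigenvalues ∘ σ = hA.eigenvalues ∘ Tuple.sort hA.eigenvalues := by
    refine Tuple.comp_sort_eq_comp_iff_monotone.mpr fun a b hab => ?_
    simp only [Function.comp_apply, IsHermitian.eigenvalues, σ, Equiv.trans_apply,
      Equiv.symm_apply_apply]
    exact hA.eigenvalues₀_antitone (by simpa using hab)
  rw [eigDesc, dif_pos ⟨hA, hi⟩, ← Function.comp_apply (f := hA.eigenvalues), ← hsorted]
  simp [IsHermitian.eigenvalues, σ]

lemma eigDesc_le_add_frobNorm (hA : A.IsHermitian) (hB : B.IsHermitian) {i : ℕ}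
    (hi : i - 1 < k) : eigDesc B i ≤ eigDesc A i + frobNorm (B - A) := by
  rw [eigDesc_eq_eigenvalues₀ hA hi, eigDesc_eq_eigenvalues₀ hB hi]
  refine (isSymmetric_toEuclideanLin_iff.mpr hB).eigenvalues_le_add_of_inner_sub_le
    finrank_euclideanSpace (isSymmetric_toEuclideanLin_iff.mpr hA) (fun x => ?_) _
  rw [← map_sub]
  exact inner_toEuclideanLin_apply_self_le _ x

theorem abs_eigDesc_sub_le (hA : A.IsHermitian) (hB : B.IsHermitian) (i : ℕ) :
    |eigDesc B i - eigDesc A i| ≤ frobNorm (B - A) := by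
  by_cases hi : i - 1 < k
  · rw [abs_sub_le_iff]
    constructor
    · linarith [eigDesc_le_add_frobNorm hA hB hi]
    · linarith [eigDesc_le_add_frobNorm hB hA hi, frobNorm_sub_comm A B]
  · simp only [eigDesc, hi, and_false, dite_false, sub_zero, abs_zero]
    exact Real.sqrt_nonneg _
end

lemma sq_div_one_add_le {x δ : ℝ} (hx : |x| ≤ δ) (hδ : δ ≤ 1 / 2) :
    (x / (1 + x)) ^ 2 ≤ 4 * δ ^ 2 := by
  obtain ⟨hx₁, hx₂⟩ := abs_le.mp hx
  have hx2 : x ^ 2 ≤ δ ^ 2 := by nlinarith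
  have hden : 1 ≤ 4 * (1 + x) ^ 2 := by nlinarith
  rw [div_pow, div_le_iff₀ (by nlinarith)]
  nlinarith [mul_le_mul_of_nonneg_left hden (sq_nonneg δ)]

lemma div_one_add_le_div_one_add {a b : ℝ} (ha : 0 ≤ a) (hab : a ≤ b) :
    a / (1 + a) ≤ b / (1 + b) := by
  rw [div_le_div_iff₀ (by linarith) (by linarith)]
  linarith

section ridgeRatios
variable {lam : ℕ → ℝ} {c1 c2 τ : ℝ} {j : ℕ}

lemma abs_sStar_le (hc1 : 0 < c1) {η : ℝ} (hj : sHat lam j ^ 2 ≤ η)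
    (hj1 : sHat lam (j + 1) ^ 2 ≤ η) : |sStar lam c1 j| ≤ η / c1 := by
  have hpos : 0 < sHat lam (j + 1) ^ 2 + c1 := by positivity
  have hsStar : sStar lam c1 j =
      (sHat lam j ^ 2 - sHat lam (j + 1) ^ 2) / (sHat lam (j + 1) ^ 2 + c1) := by
    rw [sStar]; field_simp; ring
  rw [hsStar, abs_div, abs_of_pos hpos]
  refine div_le_div₀ (by nlinarith [sq_nonneg (sHat lam j)]) ?_ hc1 (by nlinarith)
  rw [abs_sub_le_iff]
  constructor <;> nlinarith [sq_nonneg (sHat lam j), sq_nonneg (sHat lam (j + 1))]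

lemma one_le_sStar (hc1 : 0 < c1) {η : ℝ} (hj : 2 * (η + c1) ≤ sHat lam j ^ 2)
    (hj1 : sHat lam (j + 1) ^ 2 ≤ η) : 1 ≤ sStar lam c1 j := by
  have hpos : 0 < sHat lam (j + 1) ^ 2 + c1 := by positivity
  rw [sStar, le_sub_iff_add_le, le_div_iff₀ hpos]
  linarith

lemma rRatio_le (hτ : 0 < τ) (hc2 : c2 ≤ τ / 2) (hj : 1 ≤ sStar lam c1 j)
    (hj1 : |sStar lam c1 (j + 1)| ≤ c2) : rRatio lam c1 c2 j ≤ τ := by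
  have hc2' : 0 ≤ c2 := (abs_nonneg _).trans hj1
  rw [rRatio, div_le_iff₀ (by linarith)]
  nlinarith [(abs_le.mp hj1).2]

lemma lt_rRatio (hτ0 : 0 ≤ τ) (hτ1 : τ < 1) (hc2 : 0 < c2) {ε : ℝ}
    (hε : 4 * ε ≤ c2 * (1 - τ)) (hj : |sStar lam c1 j| ≤ ε)
    (hj1 : |sStar lam c1 (j + 1)| ≤ ε) : τ < rRatio lam c1 c2 j := by
  obtain ⟨hj₁, hj₂⟩ := abs_le.mp hj
  have hj1₁ := (abs_le.mp hj1).1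
  have hgap : 0 < c2 * (1 - τ) := mul_pos hc2 (by linarith)
  have hε0 : 0 ≤ ε := (abs_nonneg _).trans hj
  rw [rRatio, lt_div_iff₀ (by nlinarith)]
  nlinarith

end ridgeRatios

theorem isGreatest_tdrr_set {q p : ℕ} (hq : 1 ≤ q) (hp : q + 2 ≤ p) {lamhat : ℕ → ℝ}
    {δ c1 c2 τ : ℝ} (hq_sHat : 2 * (4 * δ ^ 2 + c1) ≤ sHat lamhat q ^ 2)
    (hsmall : ∀ j, q < j → j ≤ p → |lamhat j| ≤ δ) (hδ : δ ≤ 1 / 2)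
    (hc1 : 0 < c1) (hc2 : 0 < c2) (hc2τ : c2 ≤ τ / 2) (hτ0 : 0 < τ) (hτ1 : τ < 1)
    (hδc : 16 * δ ^ 2 ≤ c1 * c2 * (1 - τ)) :
    IsGreatest {j | 1 ≤ j ∧ j ≤ p - 2 ∧ rRatio lamhat c1 c2 j ≤ τ} q := by
  have hsmall_sq : ∀ j, q < j → j ≤ p → sHat lamhat j ^ 2 ≤ 4 * δ ^ 2 := fun j hqj hjp =>
    sq_div_one_add_le (hsmall j hqj hjp) hδ
  have hstar : ∀ j, q < j → j + 1 ≤ p → |sStar lamhat c1 j| ≤ 4 * δ ^ 2 / c1 :=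
    fun j hqj hjp =>
      abs_sStar_le hc1 (hsmall_sq j hqj (by omega)) (hsmall_sq (j + 1) (by omega) hjp)
  have hε : 4 * (4 * δ ^ 2 / c1) ≤ c2 * (1 - τ) := by
    rw [mul_div_assoc', div_le_iff₀ hc1]; linarith
  refine ⟨⟨hq, by omega, rRatio_le hτ0 hc2τ ?_ ?_⟩, fun j ⟨_, hjp, hrj⟩ => ?_⟩
  · exact one_le_sStar hc1 hq_sHat (hsmall_sq (q + 1) (by omega) (by omega))
  · refine (hstar (q + 1) (by omega) (by omega)).trans ?_
    nlinarith [div_nonneg (sq_nonneg δ) hc1.le]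
  · by_contra! hqj
    exact (lt_rRatio hτ0.le hτ1 hc2 hε (hstar j hqj (by omega))
      (hstar (j + 1) (by omega) (by omega))).not_ge hrj

theorem isGreatest_tdrr_set_of_abs_sub_le {q p : ℕ} (hq : 1 ≤ q) (hp : q + 2 ≤ p)
    {lamhat : ℕ → ℝ} {μ δ c1 c2 τ : ℝ} (hμ : 0 < μ) (htop : |lamhat q - μ| ≤ δ)
    (hsmall : ∀ j, q < j → j ≤ p → |lamhat j| ≤ δ)
    (hc1 : 0 < c1) (hc1μ : c1 ≤ (μ / (2 + μ)) ^ 2 / 4) (hc2 : 0 < c2) (hc2τ : c2 ≤ τ / 2)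
    (hτ0 : 0 < τ) (hτ1 : τ < 1) (hδc : 16 * δ ^ 2 ≤ c1 * c2 * (1 - τ)) :
    IsGreatest {j | 1 ≤ j ∧ j ≤ p - 2 ∧ rRatio lamhat c1 c2 j ≤ τ} q := by
  set m := μ / (2 + μ) with hm
  have hm0 : 0 < m := by positivity
  have hm1 : m ≤ 1 := (div_le_one (by linarith)).mpr (by linarith)
  have hmμ : m ≤ μ / 2 := div_le_div_of_nonneg_left hμ.le two_pos (by linarith)
  have hδ0 : 0 ≤ δ := (abs_nonneg _).trans htop
  have hδc' : 4 * δ ^ 2 ≤ c1 / 8 := by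
    have : c2 * (1 - τ) ≤ 1 / 2 := by nlinarith
    nlinarith [mul_le_mul_of_nonneg_left this hc1.le]
  have hδm : δ ≤ m / 2 := by
    refine (pow_le_pow_iff_left₀ hδ0 (by positivity) two_ne_zero).mp ?_
    nlinarith
  have hm_sHat : m ≤ sHat lamhat q := by
    have h : μ / 2 ≤ lamhat q := by linarith [(abs_le.mp htop).1]
    have := div_one_add_le_div_one_add (by positivity) h
    rwa [show μ / 2 / (1 + μ / 2) = m by rw [hm]; field_simp] at this
  refine isGreatest_tdrr_set hq hp ?_ hsmall (by linarith) hc1 hc2 hc2τ hτ0 hτ1 hδc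
  nlinarith [pow_le_pow_left₀ hm0.le hm_sHat 2]

lemma mul_sq_mul_sqrt_div_le {K C κ a b n p : ℝ} (hn : 0 < n) (hp : 0 < p) (hκ : 0 < κ)
    (h : K * C ^ 2 / κ ≤ n * a * b / p) : K * (C * √(p / n)) ^ 2 ≤ a * b * κ := by
  rw [div_le_div_iff₀ hκ hp] at h
  rw [mul_pow, Real.sq_sqrt (by positivity), show K * (C ^ 2 * (p / n)) = K * C ^ 2 * p / n by ring,
    div_le_iff₀ hn]
  linarith

lemma tendsto_measure_one_of_measure_compl_le {Ω ι : Type*} [MeasurableSpace Ω]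
    {P : Measure Ω} [IsProbabilityMeasure P] {l : Filter ι} {A : ι → Set Ω}
    (h : ∀ ε : ℝ≥0∞, 0 < ε → ∀ᶠ n in l, P (A n)ᶜ ≤ ε) :
    Tendsto (fun n => P (A n)) l (𝓝 1) := by
  rw [ENNReal.tendsto_nhds ENNReal.one_ne_top]
  intro ε hε
  filter_upwards [h ε hε] with n hn
  refine ⟨tsub_le_iff_right.mpr ?_, prob_le_one.trans le_self_add⟩
  calc 1 = P Set.univ := measure_univ.symm
    _ ≤ P (A n) + P (A n)ᶜ := measure_univ_le_add_compl _
    _ ≤ P (A n) + ε := by gcongr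

theorem tdrr_consistent_divergent_p_general (Ω : Type*) [MeasurableSpace Ω]
    (P : Measure Ω) [IsProbabilityMeasure P]
    (q : ℕ) (hq : 1 ≤ q)
    (p : ℕ → ℕ) (hp : ∀ n, q + 2 ≤ p n)
    (lam : ℕ → ℝ)
    (hpos : 0 < lam q)
    (Mlim : (n : ℕ) → Matrix (Fin (p n)) (Fin (p n)) ℝ)
    (hMlim : ∀ n, (Mlim n).PosSemidef)
    (heig : ∀ n j, 1 ≤ j → j ≤ q → eigDesc (Mlim n) j = lam j)
    (heigzero : ∀ n j, q < j → j ≤ p n → eigDesc (Mlim n) j = 0)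
    (Mn : (n : ℕ) → Ω → Matrix (Fin (p n)) (Fin (p n)) ℝ)
    (hherm : ∀ n ω, (Mn n ω).IsHermitian)
    (hOp : ∀ ε : ℝ≥0∞, 0 < ε → ∃ C : ℝ, 0 < C ∧ ∀ n : ℕ, 1 ≤ n →
      P {ω | C * Real.sqrt ((p n : ℝ) / n) < frobNorm (Mn n ω - Mlim n)} ≤ ε)
    (c1 c2 : ℕ → ℝ) (hc1pos : ∀ n, 0 < c1 n) (hc2pos : ∀ n, 0 < c2 n)
    (hc1 : Tendsto c1 atTop (nhds 0)) (hc2 : Tendsto c2 atTop (nhds 0))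
    (hncc : Tendsto (fun n : ℕ => (n : ℝ) * c1 n * c2 n / (p n : ℝ)) atTop atTop)
    (τ : ℝ) (hτ0 : 0 < τ) (hτ1 : τ < 1) :
    Tendsto (fun n => P {ω |
        {j | 1 ≤ j ∧ j ≤ p n - 2 ∧
          rRatio (fun i => eigDesc (Mn n ω) i) (c1 n) (c2 n) j ≤ τ}.Nonempty ∧
        sSup {j | 1 ≤ j ∧ j ≤ p n - 2 ∧
          rRatio (fun i => eigDesc (Mn n ω) i) (c1 n) (c2 n) j ≤ τ} = q})
      atTop (nhds 1) := by
  refine tendsto_measure_one_of_measure_compl_le fun ε hε => ?_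
  obtain ⟨C, -, hbad⟩ := hOp ε hε
  filter_upwards [hc1.eventually (eventually_le_nhds (by positivity :
      0 < (lam q / (2 + lam q)) ^ 2 / 4)),
    hc2.eventually (eventually_le_nhds (by linarith : 0 < τ / 2)),
    hncc.eventually_ge_atTop (16 * C ^ 2 / (1 - τ)), eventually_ge_atTop 1]
    with n hc1n hc2n hrate hn
  refine (measure_mono ?_).trans (hbad n hn)
  rw [Set.compl_subset_comm]
  intro ω hω
  have hclose : ∀ j, |eigDesc (Mn n ω) j - eigDesc (Mlim n) j| ≤ C * √(p n / n) := fun j =>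
    (abs_eigDesc_sub_le (hMlim n).1 (hherm n ω) j).trans (not_lt.mp hω)
  have hgreatest := isGreatest_tdrr_set_of_abs_sub_le hq (hp n) hpos
    (by simpa [heig n q hq le_rfl] using hclose q)
    (fun j hqj hjp => by simpa [heigzero n j hqj hjp] using hclose j)
    (hc1pos n) hc1n (hc2pos n) hc2n hτ0 hτ1
    (mul_sq_mul_sqrt_div_le (Nat.cast_pos.mpr hn) (Nat.cast_pos.mpr (by have := hp n; omega))
      (sub_pos.mpr hτ1) hrate)
  exact ⟨hgreatest.nonempty, hgreatest.csSup_eq⟩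

/-- Consistency of the TDRR estimate with a divergent number of covariates
`p n ≤ C₀·n^α`, `0 ≤ α < 1`: if for each `n` the random symmetric `p n × p n` matrix
`Mn n` converges to a positive semidefinite matrix `Mlim n` whose nonzero eigenvalues are
exactly `λ_1 ≥ ... ≥ λ_q > 0` (the same for all `n`) at rate `O_p((p n / n)^{1/2})` in
Frobenius norm, the ridges satisfy `c₁(n) → 0`, `c₂(n) → 0`, `n·c₁(n)·c₂(n)/p n → ∞`,
and `τ ∈ (0,1)`, then with probability tending to one the set
`S_n = {j ∈ {1, ..., p n − 2} : r_j(n) ≤ τ}` is nonempty with maximum `q`. -/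
theorem tdrr_consistent_divergent_p (Ω : Type*) [MeasurableSpace Ω]
    (P : Measure Ω) [IsProbabilityMeasure P]
    (q : ℕ) (hq : 1 ≤ q)
    (p : ℕ → ℕ) (hp : ∀ n, q + 2 ≤ p n)
    (C₀ α : ℝ) (hα0 : 0 ≤ α) (hα1 : α < 1)
    (hpgrowth : ∀ n : ℕ, 1 ≤ n → (p n : ℝ) ≤ C₀ * (n : ℝ) ^ α)
    (lam : ℕ → ℝ)
    (hdec : ∀ i j, 1 ≤ i → i ≤ j → j ≤ q → lam j ≤ lam i)
    (hpos : 0 < lam q)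
    (Mlim : (n : ℕ) → Matrix (Fin (p n)) (Fin (p n)) ℝ)
    (hMlim : ∀ n, (Mlim n).PosSemidef)
    (heig : ∀ n j, 1 ≤ j → j ≤ q → eigDesc (Mlim n) j = lam j)
    (heigzero : ∀ n j, q < j → j ≤ p n → eigDesc (Mlim n) j = 0)
    (Mn : (n : ℕ) → Ω → Matrix (Fin (p n)) (Fin (p n)) ℝ)
    (hmeas : ∀ n i j, Measurable (fun ω => Mn n ω i j))
    (hherm : ∀ n ω, (Mn n ω).IsHermitian)
    (hOp : ∀ ε : ℝ≥0∞, 0 < ε → ∃ C : ℝ, 0 < C ∧ ∀ n : ℕ, 1 ≤ n →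
      P {ω | C * Real.sqrt ((p n : ℝ) / n) < frobNorm (Mn n ω - Mlim n)} ≤ ε)
    (c1 c2 : ℕ → ℝ) (hc1pos : ∀ n, 0 < c1 n) (hc2pos : ∀ n, 0 < c2 n)
    (hc1 : Tendsto c1 atTop (nhds 0)) (hc2 : Tendsto c2 atTop (nhds 0))
    (hncc : Tendsto (fun n : ℕ => (n : ℝ) * c1 n * c2 n / (p n : ℝ)) atTop atTop)
    (τ : ℝ) (hτ0 : 0 < τ) (hτ1 : τ < 1) :
    Tendsto (fun n => P {ω |
        {j | 1 ≤ j ∧ j ≤ p n - 2 ∧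
          rRatio (fun i => eigDesc (Mn n ω) i) (c1 n) (c2 n) j ≤ τ}.Nonempty ∧
        sSup {j | 1 ≤ j ∧ j ≤ p n - 2 ∧
          rRatio (fun i => eigDesc (Mn n ω) i) (c1 n) (c2 n) j ≤ τ} = q})
      atTop (nhds 1) :=
  tdrr_consistent_divergent_p_general Ω P q hq p hp lam hpos Mlim hMlim heig heigzero Mn hherm hOp
    c1 c2 hc1pos hc2pos hc1 hc2 hncc τ hτ0 hτ1
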